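/- arXiv:1003.2562 — 4 statements merged into one kernel-verified Lean document; each statement's English description precedes it below -/
import Mathlib

section
/- The Orlicz norms of the Lions concentration family satisfy ‖f_α‖_𝓛 → 0 as α → 0⁺. -/
open MeasureTheory Real Filter Topology
open scoped ENNReal NNReal RealInnerProductSpace

noncomputable section

abbrev Plane : Type := EuclideanSpace ℝ (Fin 2)

/-- `g` is the distributional (weak) gradient of `u` on `ℝ²`, expressed by integration by
parts against smooth compactly supported test functions. -/
def HasWeakGradient (u : Plane → ℝ) (g : Plane → Plane) : Prop :=
  ∀ φ : Plane → ℝ, ContDiff ℝ (⊤ : ℕ∞) φ → HasCompactSupport φ → ∀ e : Plane,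
    (∫ x, u x * fderiv ℝ φ x e) = - ∫ x, ⟪g x, e⟫ * φ x

/-- `u ∈ H¹(ℝ²)` with weak gradient `g`. -/
def MemH1 (u : Plane → ℝ) (g : Plane → Plane) : Prop :=
  MemLp u 2 volume ∧ MemLp g 2 volume ∧ HasWeakGradient u g

/-- squared `L²` norm -/
def l2Sq (u : Plane → ℝ) : ℝ := ∫ x, u x ^ 2

/-- squared `L²` norm of a gradient field -/
def gradSq (g : Plane → Plane) : ℝ := ∫ x, ‖g x‖ ^ 2

/-- the `H¹` norm, `‖u‖_{H¹}² = ‖u‖_{L²}² + ‖∇u‖_{L²}²` -/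
def h1Norm (u : Plane → ℝ) (g : Plane → Plane) : ℝ := Real.sqrt (l2Sq u + gradSq g)

/-- the Trudinger–Moser integral `∫ (e^{a u²} − 1)` -/
def tmInt (a : ℝ) (u : Plane → ℝ) : ℝ≥0∞ :=
  ∫⁻ x, ENNReal.ofReal (Real.exp (a * u x ^ 2) - 1)

/-- `sup {∫ (e^{a u²} − 1) : ‖u‖_{H¹} ≤ 1}` -/
def tmSup (a : ℝ) : ℝ≥0∞ :=
  ⨆ (u : Plane → ℝ) (g : Plane → Plane) (_ : MemH1 u g ∧ h1Norm u g ≤ 1), tmInt a u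

/-- the Trudinger–Moser constant `κ` -/
def kappa : ℝ≥0∞ := tmSup (4 * π)

/-- the Orlicz norm `‖u‖_𝓛` associated to `φ(s) = e^{s²} − 1` (with constant `κ`) -/
def orliczNorm (u : Plane → ℝ) : ℝ :=
  sInf {l : ℝ | 0 < l ∧ (∫⁻ x, ENNReal.ofReal (Real.exp (u x ^ 2 / l ^ 2) - 1)) ≤ kappa}

/-- a function on `ℝ²` is radial if it only depends on `|x|` -/
def IsRadial (u : Plane → ℝ) : Prop := ∀ x y : Plane, ‖x‖ = ‖y‖ → u x = u y

/-- `u_n ⇀ 0` weakly in `H¹(ℝ²)` (tested against any `H¹` function) -/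
def WeakH1ToZero (u : ℕ → Plane → ℝ) (g : ℕ → Plane → Plane) : Prop :=
  ∀ (v : Plane → ℝ) (h : Plane → Plane), MemH1 v h →
    Tendsto (fun n => (∫ x, u n x * v x) + ∫ x, ⟪g n x, h x⟫) atTop (𝓝 0)

/-- no lack of compactness at infinity: `lim_{R→∞} limsup_n ∫_{|x|>R} u_n² = 0` -/
def CompactAtInfinity (u : ℕ → Plane → ℝ) : Prop :=
  Tendsto (fun R : ℝ =>
    limsup (fun n => ∫ x in {x : Plane | R < ‖x‖}, u n x ^ 2) atTop) atTop (𝓝 0)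

/-- a scale is a sequence of positive reals tending to `∞` -/
def IsScale (a : ℕ → ℝ) : Prop := (∀ n, 0 < a n) ∧ Tendsto a atTop atTop

/-- two scales are orthogonal when `|log (β_n/α_n)| → ∞` -/
def OrthScales (a b : ℕ → ℝ) : Prop := Tendsto (fun n => |Real.log (b n / a n)|) atTop atTop

/-- the measure `e^{-2s} ds` on `ℝ` -/
def profileMeasure : Measure ℝ := volume.withDensity fun s => ENNReal.ofReal (Real.exp (-2 * s))

/-- the set of profiles `𝒫` -/
def IsProfile (ψ : ℝ → ℝ) : Prop :=
  MemLp ψ 2 profileMeasure ∧ MemLp (deriv ψ) 2 volume ∧ ∀ s ≤ 0, ψ s = 0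

/-- `g_n(x) = √(α_n/2π) ψ(−log|x|/α_n)` -/
def profileGen (a : ℕ → ℝ) (ψ : ℝ → ℝ) (n : ℕ) (x : Plane) : ℝ :=
  Real.sqrt (a n / (2 * π)) * ψ (-Real.log ‖x‖ / a n)

/-- the gradient of `g_n(x) = √(α_n/2π) ψ(−log|x|/α_n)` -/
def profileGenGrad (a : ℕ → ℝ) (ψ : ℝ → ℝ) (n : ℕ) (x : Plane) : Plane :=
  (Real.sqrt (a n / (2 * π)) * deriv ψ (-Real.log ‖x‖ / a n) * (-(1 / (a n * ‖x‖ ^ 2)))) • x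

/-- the Lions concentration family `f_α` -/
def lionsF (a : ℝ) (x : Plane) : ℝ :=
  if 1 ≤ ‖x‖ then 0
  else if Real.exp (-a) ≤ ‖x‖ then -Real.log ‖x‖ / Real.sqrt (2 * a * π)
  else Real.sqrt (a / (2 * π))


private lemma lionsF_nonneg {a : ℝ} (x : Plane) : 0 ≤ lionsF a x := by
  unfold lionsF
  split_ifs with h1 h2
  · exact le_refl 0
  · apply div_nonneg _ (Real.sqrt_nonneg _)
    have : Real.log ‖x‖ ≤ 0 := Real.log_nonpos (norm_nonneg x) (le_of_not_ge h1)
    linarith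
  · exact Real.sqrt_nonneg _

private lemma lionsF_le {a : ℝ} (ha : 0 < a) (x : Plane) :
    lionsF a x ≤ Real.sqrt (a / (2 * π)) := by
  unfold lionsF
  split_ifs with h1 h2
  · positivity
  · have hlog : -Real.log ‖x‖ ≤ a := by
      have h := Real.log_le_log (Real.exp_pos (-a)) h2
      rw [Real.log_exp] at h
      linarith
    have hs : (0:ℝ) < Real.sqrt (2 * a * π) := Real.sqrt_pos.2 (by positivity)
    have key : a / Real.sqrt (2 * a * π) = Real.sqrt (a / (2 * π)) := by
      have h1' : Real.sqrt (2 * a * π) = Real.sqrt (2 * π) * Real.sqrt a := by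
        rw [show 2 * a * π = (2 * π) * a by ring, Real.sqrt_mul (by positivity)]
      have h2' : Real.sqrt (a / (2 * π)) = Real.sqrt a / Real.sqrt (2 * π) := by
        rw [Real.sqrt_div ha.le]
      rw [h1', h2', div_eq_div_iff (by positivity) (by positivity)]
      linear_combination (-(Real.sqrt (2 * π))) * (Real.sq_sqrt ha.le)
    calc -Real.log ‖x‖ / Real.sqrt (2 * a * π) ≤ a / Real.sqrt (2 * a * π) := by gcongr
      _ = Real.sqrt (a / (2 * π)) := key
  · exact le_refl _

private lemma lionsF_sq_le {a : ℝ} (ha : 0 < a) (x : Plane) :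
    lionsF a x ^ 2 ≤ a / (2 * π) := by
  calc lionsF a x ^ 2 ≤ Real.sqrt (a / (2 * π)) ^ 2 :=
        pow_le_pow_left₀ (lionsF_nonneg x) (lionsF_le ha x) 2
    _ = a / (2 * π) := Real.sq_sqrt (by positivity)

private lemma lionsF_integral_le {a m : ℝ} (ha : 0 < a) (hm : 0 < m) :
    (∫⁻ x, ENNReal.ofReal (Real.exp (lionsF a x ^ 2 / m ^ 2) - 1)) ≤
      ENNReal.ofReal (Real.exp (a / (2 * π) / m ^ 2) - 1) *
        volume (Metric.ball (0 : Plane) 1) := by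
  set C := ENNReal.ofReal (Real.exp (a / (2 * π) / m ^ 2) - 1) with hC
  calc (∫⁻ x, ENNReal.ofReal (Real.exp (lionsF a x ^ 2 / m ^ 2) - 1))
      ≤ ∫⁻ x, (Metric.ball (0 : Plane) 1).indicator (fun _ => C) x := by
        apply lintegral_mono
        intro x
        by_cases hx : x ∈ Metric.ball (0 : Plane) 1
        · rw [Set.indicator_of_mem hx]
          apply ENNReal.ofReal_le_ofReal
          have : lionsF a x ^ 2 / m ^ 2 ≤ a / (2 * π) / m ^ 2 := by
            gcongr
            exact lionsF_sq_le ha x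
          have := Real.exp_le_exp.2 this
          linarith
        · rw [Set.indicator_of_notMem hx]
          have hx1 : 1 ≤ ‖x‖ := by
            rw [Metric.mem_ball, dist_zero_right, not_lt] at hx
            exact hx
          have : lionsF a x = 0 := if_pos hx1
          simp [this]
    _ = C * volume (Metric.ball (0 : Plane) 1) := by
        rw [lintegral_indicator measurableSet_ball, setLIntegral_const]

private lemma lionsF_integral_pos {a m : ℝ} (ha : 0 < a) (hm : 0 < m) :
    0 < ∫⁻ x, ENNReal.ofReal (Real.exp (lionsF a x ^ 2 / m ^ 2) - 1) := by
  set c := ENNReal.ofReal (Real.exp (a / (2 * π) / m ^ 2) - 1) with hc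
  have hcpos : 0 < c := by
    rw [hc]
    apply ENNReal.ofReal_pos.2
    have h := Real.exp_lt_exp.2 (show (0:ℝ) < a / (2 * π) / m ^ 2 by positivity)
    rw [Real.exp_zero] at h
    linarith
  have hvpos : 0 < volume (Metric.ball (0 : Plane) (Real.exp (-a))) :=
    Metric.measure_ball_pos volume _ (Real.exp_pos _)
  have hlow : c * volume (Metric.ball (0 : Plane) (Real.exp (-a))) ≤
      ∫⁻ x, ENNReal.ofReal (Real.exp (lionsF a x ^ 2 / m ^ 2) - 1) := by
    rw [← setLIntegral_const, ← lintegral_indicator measurableSet_ball]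
    apply lintegral_mono
    intro x
    by_cases hx : x ∈ Metric.ball (0 : Plane) (Real.exp (-a))
    · rw [Set.indicator_of_mem hx]
      rw [Metric.mem_ball, dist_zero_right] at hx
      have hea : Real.exp (-a) < 1 := Real.exp_lt_one_iff.2 (by linarith)
      have hf : lionsF a x = Real.sqrt (a / (2 * π)) := by
        unfold lionsF
        rw [if_neg (by linarith : ¬ (1:ℝ) ≤ ‖x‖), if_neg (not_le.2 hx)]
      simp only [hf]
      rw [Real.sq_sqrt (by positivity)]
    · rw [Set.indicator_of_notMem hx]
      exact zero_le
  have : 0 < c * volume (Metric.ball (0 : Plane) (Real.exp (-a))) :=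
    ENNReal.mul_pos hcpos.ne' hvpos.ne'
  exact lt_of_lt_of_le this hlow

/-- `‖f_α‖_𝓛 → 0` as `α → 0⁺`. -/
theorem orliczNorm_lionsF_tendsto_zero :
    Tendsto (fun a : ℝ => orliczNorm (lionsF a)) (𝓝[>] (0 : ℝ)) (𝓝 0) := by
  rw [Metric.tendsto_nhds]
  intro ε hε
  set l : ℝ := ε / 2 with hl
  have hlpos : 0 < l := by positivity
  have hnonneg : ∀ a : ℝ, 0 ≤ orliczNorm (lionsF a) := fun a =>
    Real.sInf_nonneg (fun x hx => hx.1.le)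
  rcases eq_or_ne kappa 0 with hk | hk
  · filter_upwards [self_mem_nhdsWithin] with a (ha : 0 < a)
    have hempty : {m : ℝ | 0 < m ∧
        (∫⁻ x, ENNReal.ofReal (Real.exp (lionsF a x ^ 2 / m ^ 2) - 1)) ≤ kappa} = ∅ := by
      rw [Set.eq_empty_iff_forall_notMem]
      rintro m ⟨hm, hint⟩
      rw [hk, le_zero_iff] at hint
      exact (lionsF_integral_pos ha hm).ne' hint
    rw [Real.dist_eq, sub_zero]
    unfold orliczNorm
    rw [hempty, Real.sInf_empty, abs_zero]
    exact hε
  · have hkpos : 0 < kappa := pos_iff_ne_zero.2 hk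
    have h1 : Tendsto (fun a : ℝ => Real.exp (a / (2 * π) / l ^ 2) - 1) (𝓝 0) (𝓝 0) := by
      have hcont : Continuous fun a : ℝ => Real.exp (a / (2 * π) / l ^ 2) - 1 := by
        continuity
      have := hcont.tendsto 0
      simpa using this
    have h2 : Tendsto (fun a : ℝ => ENNReal.ofReal (Real.exp (a / (2 * π) / l ^ 2) - 1))
        (𝓝[>] 0) (𝓝 0) := by
      have := (ENNReal.continuous_ofReal.tendsto 0).comp (h1.mono_left (nhdsWithin_le_nhds (s := Set.Ioi (0:ℝ))))
      simpa [Function.comp_def] using this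
    have h3 : Tendsto (fun a : ℝ => ENNReal.ofReal (Real.exp (a / (2 * π) / l ^ 2) - 1) *
        volume (Metric.ball (0 : Plane) 1)) (𝓝[>] 0) (𝓝 0) := by
      have := ENNReal.Tendsto.mul_const h2
        (Or.inr (show volume (Metric.ball (0:Plane) 1) < ⊤ from measure_ball_lt_top).ne)
      simpa using this
    have hev : ∀ᶠ a in 𝓝[>] (0:ℝ),
        ENNReal.ofReal (Real.exp (a / (2 * π) / l ^ 2) - 1) *
          volume (Metric.ball (0 : Plane) 1) < kappa :=
      h3.eventually_lt_const hkpos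
    filter_upwards [hev, self_mem_nhdsWithin] with a hlt (ha : 0 < a)
    have hmem : l ∈ {m : ℝ | 0 < m ∧
        (∫⁻ x, ENNReal.ofReal (Real.exp (lionsF a x ^ 2 / m ^ 2) - 1)) ≤ kappa} :=
      ⟨hlpos, ((lionsF_integral_le ha hlpos).trans hlt.le)⟩
    have hle : orliczNorm (lionsF a) ≤ l :=
      csInf_le ⟨0, fun x hx => hx.1.le⟩ hmem
    rw [Real.dist_eq, sub_zero, abs_of_nonneg (hnonneg a)]
    linarith

end
end

section
/- As α → ∞, I_α := ∫_{e^{−α}}^{1} r e^{(2/α) (log r)²} dr → 1 and J_α := ∫_{e^{−α}}^{1} r² e^{(2/α) (log r)²} dr → 1/3. -/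
open MeasureTheory Real Filter Topology
open scoped ENNReal NNReal RealInnerProductSpace

noncomputable section

private lemma expint (b : ℝ) (hb : 0 < b) :
    ∫ x in Set.Ioi (0:ℝ), Real.exp (-(b*x)) = 1/b := by
  have h : ∀ x ∈ Set.Ici (0:ℝ), HasDerivAt (fun x => -Real.exp (-(b*x))/b) (Real.exp (-(b*x))) x := by
    intro x _
    have : HasDerivAt (fun x : ℝ => -(b*x)) (-b) x := by
      simpa using (hasDerivAt_id x).const_mul (-b)
    have := this.exp
    rw [show (fun x => -Real.exp (-(b*x))/b) = fun y => -1/b * Real.exp (-(b*y)) from by funext y; ring]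
    exact (this.const_mul (-1/b)).congr_deriv (by rw [div_mul_eq_mul_div, div_eq_iff hb.ne']; ring)
  have hint : IntegrableOn (fun x => Real.exp (-(b*x))) (Set.Ioi (0:ℝ)) := by
    simpa [mul_comm] using exp_neg_integrableOn_Ioi 0 hb
  have hlim : Tendsto (fun x => -Real.exp (-(b*x))/b) atTop (𝓝 0) := by
    have : Tendsto (fun x : ℝ => -(b*x)) atTop atBot := by
      exact tendsto_neg_atTop_atBot.comp ((tendsto_const_mul_atTop_of_pos hb).mpr tendsto_id)
    simpa using ((Real.tendsto_exp_atBot.comp this).neg.div_const b)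
  have := integral_Ioi_of_hasDerivAt_of_tendsto' (fun x hx => h x hx) hint hlim
  rw [this]
  simp [neg_div]

private lemma key (b c : ℝ) (hc : 0 < c) (hbc : 2*c ≤ b - 1) :
    Tendsto (fun a : ℝ => ∫ t in (0:ℝ)..(c*a), Real.exp (-b*t + (2/a)*t^2)) atTop (𝓝 (1/b)) := by
  have hb : 0 < b := by linarith
  set F : ℝ → ℝ → ℝ := fun a => Set.indicator (Set.Ioc 0 (c*a)) (fun t => Real.exp (-b*t + (2/a)*t^2)) with hF
  set lf : ℝ → ℝ := Set.indicator (Set.Ioi (0:ℝ)) (fun t => Real.exp (-(b*t))) with hlf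
  have hca : Tendsto (fun a : ℝ => c*a) atTop atTop :=
    (tendsto_const_mul_atTop_of_pos hc).mpr tendsto_id
  have main : Tendsto (fun a : ℝ => ∫ t, F a t) atTop (𝓝 (∫ t, lf t)) := by
    apply MeasureTheory.tendsto_integral_filter_of_dominated_convergence
      (bound := Set.indicator (Set.Ioi (0:ℝ)) (fun t => Real.exp (-t)))
    · filter_upwards with a
      exact ((Real.continuous_exp.comp (by continuity)).aestronglyMeasurable).indicator
        measurableSet_Ioc
    · filter_upwards [eventually_ge_atTop (1:ℝ)] with a ha
      apply ae_of_all
      intro t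
      have ha0 : (0:ℝ) < a := lt_of_lt_of_le one_pos ha
      by_cases ht : t ∈ Set.Ioc 0 (c*a)
      · simp only [hF]
        rw [Set.indicator_of_mem ht, Set.indicator_of_mem (Set.mem_Ioi.mpr ht.1),
          Real.norm_eq_abs, abs_of_nonneg (Real.exp_nonneg _)]
        apply Real.exp_le_exp.mpr
        have h1 : (2/a)*t^2 ≤ (b-1)*t := by
          rw [div_mul_eq_mul_div, div_le_iff₀ ha0]
          nlinarith [mul_le_mul_of_nonneg_left ht.2 (by linarith [ht.1] : (0:ℝ) ≤ 2*t), mul_le_mul_of_nonneg_right hbc (mul_nonneg ha0.le ht.1.le)]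
        linarith
      · simp only [hF]
        rw [Set.indicator_of_notMem ht]
        simp only [norm_zero]
        exact Set.indicator_nonneg (fun t _ => Real.exp_nonneg _) t
    · rw [integrable_indicator_iff measurableSet_Ioi]
      simpa using exp_neg_integrableOn_Ioi 0 one_pos
    · apply ae_of_all
      intro t
      rcases lt_or_ge 0 t with ht | ht
      · simp only [hlf]
        rw [Set.indicator_of_mem (Set.mem_Ioi.mpr ht)]
        have h2a : Tendsto (fun a : ℝ => 2/a) atTop (𝓝 0) :=
          tendsto_const_nhds.div_atTop tendsto_id
        have hexp : Tendsto (fun a : ℝ => Real.exp (-b*t + (2/a)*t^2)) atTop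
            (𝓝 (Real.exp (-(b*t)))) := by
          have := ((h2a.mul_const (t^2)).const_add (-b*t))
          have := (Real.continuous_exp.continuousAt.tendsto).comp this
          simpa [Function.comp_def] using this
        apply hexp.congr'
        filter_upwards [hca.eventually_ge_atTop t] with a ha
        simp only [hF]
        rw [Set.indicator_of_mem (Set.mem_Ioc.mpr ⟨ht, ha⟩)]
      · apply tendsto_const_nhds.congr'
        filter_upwards with a
        simp only [hlf, hF]
        rw [Set.indicator_of_notMem (by simpa using ht),
          Set.indicator_of_notMem (fun h => absurd h.1 (not_lt.mpr ht))]
  have hval : (∫ t, lf t) = 1/b := by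
    rw [hlf, MeasureTheory.integral_indicator measurableSet_Ioi, expint b hb]
  rw [hval] at main
  apply main.congr'
  filter_upwards [eventually_ge_atTop (0:ℝ)] with a ha
  simp only [hF]
  rw [MeasureTheory.integral_indicator measurableSet_Ioc,
    intervalIntegral.integral_of_le (by positivity : (0:ℝ) ≤ c*a)]

private lemma substK (a : ℝ) (k : ℕ) :
    (∫ r in Real.exp (-a)..1, r^k * Real.exp ((2/a) * Real.log r ^ 2))
      = ∫ t in (0:ℝ)..a, Real.exp (-((k:ℝ)+1)*t + (2/a)*t^2) := by
  have hg : ContinuousOn (fun r : ℝ => r^k * Real.exp ((2/a) * Real.log r ^ 2))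
      ((fun t => Real.exp (-t)) '' (Set.uIcc a 0)) := by
    apply ContinuousOn.mono (s := {r : ℝ | 0 < r})
    · exact (continuousOn_pow k).mul
        (((Real.continuousOn_log.mono (by intro x hx; exact ne_of_gt hx)).pow 2).const_smul (2/a)).rexp
    · rintro r ⟨t, _, rfl⟩; exact Real.exp_pos _
  have h := intervalIntegral.integral_comp_smul_deriv' (a := a) (b := 0)
      (f := fun t => Real.exp (-t)) (f' := fun t => -Real.exp (-t))
      (g := fun r : ℝ => r^k * Real.exp ((2/a) * Real.log r ^ 2))
      (fun x _ => by simpa using ((hasDerivAt_neg x).exp))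
      ((Real.continuous_exp.comp continuous_neg).neg.continuousOn) hg
  simp only [neg_zero, Real.exp_zero] at h
  rw [← h, intervalIntegral.integral_symm]
  rw [← intervalIntegral.integral_neg]
  apply intervalIntegral.integral_congr
  intro t _
  simp only [smul_eq_mul, Function.comp]
  rw [Real.log_exp, ← Real.exp_nat_mul]
  rw [neg_mul, neg_neg]; ring_nf
  rw [← Real.exp_add]
  exact (Real.exp_add _ _).symm

private lemma symm_split (a : ℝ) (ha : 0 < a) :
    (∫ t in (0:ℝ)..a, Real.exp (-2*t + (2/a)*t^2))
      = 2 * ∫ t in (0:ℝ)..(a/2), Real.exp (-2*t + (2/a)*t^2) := by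
  have hcont : Continuous fun t : ℝ => Real.exp (-2*t + (2/a)*t^2) := by continuity
  have h1 : (∫ t in (0:ℝ)..(a/2), Real.exp (-2*t + (2/a)*t^2))
      + (∫ t in (a/2)..a, Real.exp (-2*t + (2/a)*t^2))
      = ∫ t in (0:ℝ)..a, Real.exp (-2*t + (2/a)*t^2) :=
    intervalIntegral.integral_add_adjacent_intervals (hcont.intervalIntegrable _ _)
      (hcont.intervalIntegrable _ _)
  have h2 : (∫ t in (a/2)..a, Real.exp (-2*t + (2/a)*t^2))
      = ∫ t in (0:ℝ)..(a/2), Real.exp (-2*t + (2/a)*t^2) := by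
    have h3 := intervalIntegral.integral_comp_sub_left (a := 0) (b := a/2)
      (fun t => Real.exp (-2*t + (2/a)*t^2)) a
    rw [show a - a/2 = a/2 by ring, sub_zero] at h3
    rw [← h3]
    apply intervalIntegral.integral_congr
    intro x _
    have hx : -2*(a-x) + (2/a)*(a-x)^2 = -2*x + (2/a)*x^2 := by
      field_simp
      ring
    show Real.exp (-2*(a-x) + (2/a)*(a-x)^2) = Real.exp (-2*x + (2/a)*x^2)
    exact congrArg Real.exp hx
  linarith [h1, h2]

/-- as `α → ∞`, `I_α = ∫_{e^{−α}}^1 r e^{(2/α)log²r} dr → 1` and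
`J_α = ∫_{e^{−α}}^1 r² e^{(2/α)log²r} dr → 1/3`. -/
theorem lions_auxiliary_integrals :
    Tendsto (fun a : ℝ => ∫ r in Real.exp (-a)..1, r * Real.exp ((2 / a) * Real.log r ^ 2))
      atTop (𝓝 1) ∧
    Tendsto (fun a : ℝ => ∫ r in Real.exp (-a)..1, r ^ 2 * Real.exp ((2 / a) * Real.log r ^ 2))
      atTop (𝓝 (1 / 3)) := by
  constructor
  · have hkey := key 2 (1/2) (by norm_num) (by norm_num)
    have hkey2 : Tendsto (fun a : ℝ => 2 * ∫ t in (0:ℝ)..(a/2), Real.exp (-2*t + (2/a)*t^2))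
        atTop (𝓝 1) := by
      have h2 := hkey.const_mul (2:ℝ)
      rw [show (2:ℝ)*(1/2) = 1 by norm_num] at h2
      apply h2.congr
      intro a
      rw [show (1:ℝ)/2*a = a/2 by ring]
    apply hkey2.congr'
    filter_upwards [eventually_gt_atTop (0:ℝ)] with a ha
    rw [← symm_split a ha]
    have hs := substK a 1
    norm_num at hs
    rw [hs]
    simp only [neg_mul]
  · have hkey := key 3 1 (by norm_num) (by norm_num)
    have hkey3 : Tendsto (fun a : ℝ => ∫ t in (0:ℝ)..a, Real.exp (-3*t + (2/a)*t^2))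
        atTop (𝓝 (1/3)) := by
      apply hkey.congr
      intro a
      rw [one_mul]
    apply hkey3.congr'
    filter_upwards with a
    have hs := substK a 2
    norm_num at hs
    rw [hs]
    simp only [neg_mul]


end
end

section
/- Let p, q be real numbers with 0 < p < 2 and 0 < q < 2. Then I_α := e^{pα} ∫_{e^{−α²}}^{e^{−α}} e^{q (log r)² / α²} r dr → 0 as α → ∞. -/
open MeasureTheory Real Filter Topology
open scoped ENNReal NNReal RealInnerProductSpace

noncomputable section

/-- for `0 < p < 2` and `0 < q < 2`,
`e^{pα} ∫_{e^{−α²}}^{e^{−α}} e^{q log²r/α²} r dr → 0` as `α → ∞`. -/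
theorem exp_weighted_integral_tendsto_zero (p q : ℝ)
    (hp0 : 0 < p) (hp2 : p < 2) (hq0 : 0 < q) (hq2 : q < 2) :
    Tendsto (fun a : ℝ => Real.exp (p * a) *
        ∫ r in Real.exp (-a ^ 2)..Real.exp (-a),
          Real.exp (q * Real.log r ^ 2 / a ^ 2) * r)
      atTop (𝓝 0) := by
  have h2q : (0:ℝ) < 2 - q := by linarith
  -- the majorant
  have hbound : Tendsto (fun a : ℝ => Real.exp q * (a ^ 2 * Real.exp ((p - 2) * a)))
      atTop (𝓝 0) := by
    have h := (tendsto_rpow_mul_exp_neg_mul_atTop_nhds_zero 2 (2 - p) (by linarith)).const_mul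
      (Real.exp q)
    rw [mul_zero] at h
    refine h.congr' ?_
    filter_upwards [eventually_ge_atTop (0:ℝ)] with a ha
    have e : a ^ (2:ℝ) = a ^ (2:ℕ) := by
      rw [← Real.rpow_natCast a 2]; norm_num
    have e2 : -(2 - p) * a = (p - 2) * a := by ring
    rw [e, e2]
  refine tendsto_of_tendsto_of_tendsto_of_le_of_le' tendsto_const_nhds hbound ?_ ?_
  · -- nonnegativity
    filter_upwards [eventually_ge_atTop (1:ℝ)] with a ha
    have hab : Real.exp (-a ^ 2) ≤ Real.exp (-a) := by
      apply Real.exp_le_exp.2; nlinarith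
    have : 0 ≤ ∫ r in Real.exp (-a ^ 2)..Real.exp (-a),
        Real.exp (q * Real.log r ^ 2 / a ^ 2) * r := by
      apply intervalIntegral.integral_nonneg hab
      intro r hr
      have hr0 : 0 < r := lt_of_lt_of_le (Real.exp_pos _) hr.1
      positivity
    positivity
  · -- upper bound
    filter_upwards [eventually_ge_atTop (max 1 (q / (2 - q)))] with a ha
    have ha1 : (1:ℝ) ≤ a := le_trans (le_max_left _ _) ha
    have ha0 : (0:ℝ) < a := by linarith
    have haq : q ≤ (2 - q) * a := by
      have := le_trans (le_max_right _ _) ha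
      rw [div_le_iff₀ h2q] at this; linarith [this]
    have hab : Real.exp (-a ^ 2) ≤ Real.exp (-a) := by
      apply Real.exp_le_exp.2; nlinarith
    -- pointwise bound on the integrand
    have hpt : ∀ r ∈ Set.Icc (Real.exp (-a ^ 2)) (Real.exp (-a)),
        Real.exp (q * Real.log r ^ 2 / a ^ 2) * r ≤ Real.exp (q - 2 * a) * r⁻¹ := by
      intro r hr
      have hr0 : 0 < r := lt_of_lt_of_le (Real.exp_pos _) hr.1
      set t := Real.log r with ht
      have ht1 : -a ^ 2 ≤ t := by
        rw [ht, ← Real.log_exp (-a ^ 2)]; exact Real.log_le_log (Real.exp_pos _) hr.1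
      have ht2 : t ≤ -a := by
        rw [ht, ← Real.log_exp (-a)]; exact Real.log_le_log hr0 hr.2
      have key : q * t ^ 2 / a ^ 2 + 2 * t ≤ q - 2 * a := by
        rw [div_add' _ _ _ (by positivity), div_le_iff₀ (by positivity)]
        have h1 : t + a ≤ 0 := by linarith
        have h2 : 0 ≤ q * (t - a) + 2 * a ^ 2 := by nlinarith
        nlinarith [mul_nonpos_of_nonpos_of_nonneg h1 h2]
      have hre : r = Real.exp t := (Real.exp_log hr0).symm
      rw [hre, ← Real.exp_neg, ← Real.exp_add, ← Real.exp_add]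
      exact Real.exp_le_exp.2 (by linarith)
      -- goal: q * t^2 / a^2 + t ≤ q - 2a + -t
    -- integrability
    have hint1 : IntervalIntegrable (fun r => Real.exp (q * Real.log r ^ 2 / a ^ 2) * r)
        MeasureTheory.volume (Real.exp (-a ^ 2)) (Real.exp (-a)) := by
      apply ContinuousOn.intervalIntegrable
      apply ContinuousOn.mul _ continuousOn_id
      apply Real.continuous_exp.comp_continuousOn
      apply ContinuousOn.div_const
      apply ContinuousOn.mul continuousOn_const
      apply ContinuousOn.pow
      apply Real.continuousOn_log.mono
      intro r hr
      have : 0 < r := lt_of_lt_of_le (Real.exp_pos _) (by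
        rw [Set.uIcc_of_le hab] at hr; exact hr.1)
      simp [ne_of_gt this]
    have hint2 : IntervalIntegrable (fun r : ℝ => Real.exp (q - 2 * a) * r⁻¹)
        MeasureTheory.volume (Real.exp (-a ^ 2)) (Real.exp (-a)) := by
      apply ContinuousOn.intervalIntegrable
      apply ContinuousOn.mul continuousOn_const
      apply ContinuousOn.inv₀ continuousOn_id
      intro r hr
      have : 0 < r := lt_of_lt_of_le (Real.exp_pos _) (by
        rw [Set.uIcc_of_le hab] at hr; exact hr.1)
      exact ne_of_gt this
    have hmono := intervalIntegral.integral_mono_on hab hint1 hint2 hpt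
    have hIval : (∫ r in Real.exp (-a ^ 2)..Real.exp (-a), Real.exp (q - 2 * a) * r⁻¹)
        = Real.exp (q - 2 * a) * (a ^ 2 - a) := by
      rw [intervalIntegral.integral_const_mul, integral_inv]
      · rw [← Real.exp_sub, Real.log_exp]; ring_nf
      · rw [Set.uIcc_of_le hab]
        intro h
        exact absurd h.1 (not_le.2 (Real.exp_pos _))
    calc Real.exp (p * a) * ∫ r in Real.exp (-a ^ 2)..Real.exp (-a),
            Real.exp (q * Real.log r ^ 2 / a ^ 2) * r
        ≤ Real.exp (p * a) * (Real.exp (q - 2 * a) * (a ^ 2 - a)) := by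
          rw [← hIval]; exact mul_le_mul_of_nonneg_left hmono (Real.exp_nonneg _)
      _ ≤ Real.exp q * (a ^ 2 * Real.exp ((p - 2) * a)) := by
          have h1 : Real.exp (p * a) * Real.exp (q - 2 * a)
              = Real.exp q * Real.exp ((p - 2) * a) := by
            rw [← Real.exp_add, ← Real.exp_add]; ring_nf
          have h2 : (0:ℝ) ≤ Real.exp q * Real.exp ((p - 2) * a) := by positivity
          calc Real.exp (p * a) * (Real.exp (q - 2 * a) * (a ^ 2 - a))
              = Real.exp q * Real.exp ((p - 2) * a) * (a ^ 2 - a) := by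
                rw [← mul_assoc, h1]
            _ ≤ Real.exp q * Real.exp ((p - 2) * a) * a ^ 2 := by nlinarith
            _ = Real.exp q * (a ^ 2 * Real.exp ((p - 2) * a)) := by ring

end
end

section
/- Let X : [0,T] → ℝ be a nonnegative continuous function such that X(t) ≤ a + b X(t)^θ for every 0 ≤ t ≤ T, where a, b > 0 and θ > 1 are constants satisfying a < (1 − 1/θ) (θb)^{−1/(θ−1)} and X(0) ≤ (θb)^{−1/(θ−1)}. Then X(t) ≤ (θ/(θ−1)) a for every 0 ≤ t ≤ T. -/
open MeasureTheory Real Filter Topology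
open scoped ENNReal NNReal RealInnerProductSpace

noncomputable section

/-- bootstrap lemma: if a nonnegative continuous `X` on `[0,T]` satisfies
`X(t) ≤ a + b X(t)^θ` with `a < (1 − 1/θ)(θb)^{−1/(θ−1)}` and `X(0) ≤ (θb)^{−1/(θ−1)}`,
then `X(t) ≤ (θ/(θ−1)) a` on `[0,T]`. -/
theorem bootstrap_lemma (T a b θ : ℝ) (hT : 0 < T) (ha : 0 < a) (hb : 0 < b) (hθ : 1 < θ)
    (X : ℝ → ℝ)
    (hXnonneg : ∀ t ∈ Set.Icc 0 T, 0 ≤ X t)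
    (hXcont : ContinuousOn X (Set.Icc 0 T))
    (hiter : ∀ t ∈ Set.Icc 0 T, X t ≤ a + b * X t ^ θ)
    (hsmall : a < (1 - 1 / θ) * (θ * b) ^ (-(1 / (θ - 1))))
    (hinit : X 0 ≤ (θ * b) ^ (-(1 / (θ - 1)))) :
    ∀ t ∈ Set.Icc 0 T, X t ≤ θ / (θ - 1) * a := by
  set M : ℝ := (θ * b) ^ (-(1 / (θ - 1))) with hMdef
  have hθ0 : (0:ℝ) < θ := by linarith
  have hθ1 : (0:ℝ) < θ - 1 := by linarith
  have hθb : (0:ℝ) < θ * b := by positivity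
  have hMpos : 0 < M := Real.rpow_pos_of_pos hθb _
  have hMpow : M ^ (θ - 1) = (θ * b)⁻¹ := by
    rw [hMdef, ← Real.rpow_mul hθb.le]
    have : -(1 / (θ - 1)) * (θ - 1) = -1 := by field_simp
    rw [this, Real.rpow_neg_one]
  have hcM : θ / (θ - 1) * a < M := by
    have h1 : (1 - 1 / θ) * M = (θ - 1) / θ * M := by field_simp
    rw [h1] at hsmall
    rw [div_mul_eq_mul_div, div_lt_iff₀ hθ1]
    rw [div_mul_eq_mul_div, lt_div_iff₀ hθ0] at hsmall
    nlinarith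
  have key : ∀ x : ℝ, 0 ≤ x → x ≤ M → x ≤ a + b * x ^ θ → x ≤ θ / (θ - 1) * a := by
    intro x hx0 hxM hxi
    have h1 : x ^ θ = x ^ (1:ℝ) * x ^ (θ - 1) := by
      rw [← Real.rpow_add' hx0 (by intro h; apply hθ0.ne'; linarith : (1:ℝ) + (θ - 1) ≠ 0)]
      norm_num
    rw [Real.rpow_one] at h1
    have h2 : x ^ (θ - 1) ≤ M ^ (θ - 1) :=
      Real.rpow_le_rpow hx0 hxM hθ1.le
    have h3 : b * x ^ θ ≤ x / θ := by
      rw [h1]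
      calc b * (x * x ^ (θ - 1)) ≤ b * (x * M ^ (θ - 1)) := by
            apply mul_le_mul_of_nonneg_left _ hb.le
            exact mul_le_mul_of_nonneg_left h2 hx0
        _ = x / θ := by rw [hMpow]; field_simp
    have h4 : x ≤ a + x / θ := hxi.trans (by linarith)
    rw [div_mul_eq_mul_div, le_div_iff₀ hθ1]
    have h5 : x * θ ≤ (a + x / θ) * θ := mul_le_mul_of_nonneg_right h4 hθ0.le
    have h6 : (a + x / θ) * θ = a * θ + x := by field_simp
    nlinarith
  intro t ht
  by_contra hcon
  push_neg at hcon
  have hXtM : M < X t := by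
    by_contra h'
    push_neg at h'
    exact absurd (key _ (hXnonneg t ht) h' (hiter t ht)) (not_le.2 hcon)
  have h0T : (0:ℝ) ∈ Set.Icc (0:ℝ) T := ⟨le_refl 0, hT.le⟩
  have hX0 : X 0 ≤ θ / (θ - 1) * a := key _ (hXnonneg 0 h0T) hinit (hiter 0 h0T)
  have hsub : Set.Icc (0:ℝ) t ⊆ Set.Icc 0 T := Set.Icc_subset_Icc_right ht.2
  obtain ⟨s, hs, hXs⟩ := intermediate_value_Icc ht.1 (hXcont.mono hsub)
    (⟨by linarith, hXtM.le⟩ : M ∈ Set.Icc (X 0) (X t))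
  have hsT : s ∈ Set.Icc 0 T := hsub hs
  have := key (X s) (hXnonneg s hsT) (le_of_eq hXs) (hiter s hsT)
  rw [hXs] at this
  linarith

end
end
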